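/- arXiv:1603.04456 — 4 statements merged into one kernel-verified Lean document; each statement's English description precedes it below -/
import Mathlib

section
/- Let H be a real inner product space, and let a : H × H → ℝ be a symmetric bilinear form. Suppose u, u_N ∈ H satisfy ‖u‖ = ‖u_N‖ = 1, and λ, λ_N ∈ ℝ satisfy a(u,u) = λ, a(u_N,u_N) = λ_N, and a(u,u_N) = λ·⟨u,u_N⟩. Then a(u − u_N, u − u_N) = λ_N − λ + λ·‖u − u_N‖². -/
open scoped RealInnerProductSpace

theorem LinearMap.apply_sub_sub_of_symm {R M : Type*} [CommRing R] [AddCommGroup M] [Module R M]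
    (a : M →ₗ[R] M →ₗ[R] R) (hsym : ∀ v w : M, a v w = a w v) (v w : M) :
    a (v - w) (v - w) = a v v - 2 * a v w + a w w := by
  rw [map_sub, map_sub, LinearMap.sub_apply, LinearMap.sub_apply, hsym w v]
  ring

/-- Eigenvalue error identity: for a symmetric bilinear form `a` on a real inner
product space, with normalized `u, u_N`, `a u u = lam`, `a u_N u_N = lamN`, and
the consistency relation `a u u_N = lam * ⟪u, u_N⟫`, we have
`a (u - u_N) (u - u_N) = lamN - lam + lam * ‖u - u_N‖²`. -/
theorem eigenvalue_error_identity
    {H : Type*} [NormedAddCommGroup H] [InnerProductSpace ℝ H]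
    (a : H →ₗ[ℝ] H →ₗ[ℝ] ℝ) (hsym : ∀ v w : H, a v w = a w v)
    (u u_N : H) (lam lamN : ℝ)
    (hu : ‖u‖ = 1) (huN : ‖u_N‖ = 1)
    (hau : a u u = lam) (hauN : a u_N u_N = lamN)
    (hmix : a u u_N = lam * ⟪u, u_N⟫) :
    a (u - u_N) (u - u_N) = lamN - lam + lam * ‖u - u_N‖ ^ 2 := by
  rw [a.apply_sub_sub_of_symm hsym, norm_sub_sq_real, hu, huN, hau, hauN, hmix]
  ring
end

section
/- Let H be a real inner product space, and let a : H × H → ℝ be a symmetric bilinear form. Suppose u, u_N ∈ H satisfy ‖u‖ = ‖u_N‖ = 1, λ ≥ 0 and λ_N ∈ ℝ satisfy a(u,u) = λ, a(u_N,u_N) = λ_N, and a(u,u_N) = λ·⟨u,u_N⟩. Then |λ_N − λ| ≤ |a(u − u_N, u − u_N)| + λ·‖u − u_N‖². -/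
open scoped RealInnerProductSpace

-- Both cross terms `2 a(u,w)` and `2 λ⟨u,w⟩` cancel by `hmix`.
theorem rayleigh_sub_eq_of_norm_eq_one {H : Type*} [NormedAddCommGroup H]
    [InnerProductSpace ℝ H] (a : H →ₗ[ℝ] H →ₗ[ℝ] ℝ) (hsym : ∀ v w : H, a v w = a w v)
    {u w : H} (hu : ‖u‖ = 1) (hw : ‖w‖ = 1) (hmix : a u w = a u u * ⟪u, w⟫) :
    a w w - a u u = a (u - w) (u - w) - a u u * ‖u - w‖ ^ 2 := by
  rw [a.apply_sub_sub_of_symm hsym, norm_sub_sq_real, hu, hw, hmix]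
  ring

/-- Basic eigenvalue error estimate:
`|lamN - lam| ≤ |a (u - u_N) (u - u_N)| + lam * ‖u - u_N‖²`. -/
theorem eigenvalue_error_upper_estimate
    {H : Type*} [NormedAddCommGroup H] [InnerProductSpace ℝ H]
    (a : H →ₗ[ℝ] H →ₗ[ℝ] ℝ) (hsym : ∀ v w : H, a v w = a w v)
    (u u_N : H) (lam lamN : ℝ)
    (hu : ‖u‖ = 1) (huN : ‖u_N‖ = 1)
    (hlam : 0 ≤ lam)
    (hau : a u u = lam) (hauN : a u_N u_N = lamN)
    (hmix : a u u_N = lam * ⟪u, u_N⟫) :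
    |lamN - lam| ≤ |a (u - u_N) (u - u_N)| + lam * ‖u - u_N‖ ^ 2 := by
  have herr := rayleigh_sub_eq_of_norm_eq_one a hsym hu huN (hau ▸ hmix)
  rw [hau, hauN] at herr
  have hdist : 0 ≤ lam * ‖u - u_N‖ ^ 2 := by positivity
  calc |lamN - lam| = |a (u - u_N) (u - u_N) - lam * ‖u - u_N‖ ^ 2| := by rw [herr]
    _ ≤ |a (u - u_N) (u - u_N)| + |lam * ‖u - u_N‖ ^ 2| := abs_sub _ _
    _ = |a (u - u_N) (u - u_N)| + lam * ‖u - u_N‖ ^ 2 := by rw [abs_of_nonneg hdist]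
end

section
/- Let H be a real inner product space, and let a : H × H → ℝ be a symmetric bilinear form. Suppose u, u_N ∈ H satisfy ‖u‖ = ‖u_N‖ = 1, λ ≥ 0 and λ_N ∈ ℝ satisfy a(u,u) = λ, a(u_N,u_N) = λ_N, and a(u,u_N) = λ·⟨u,u_N⟩. Let E ≥ 0, and assume the coercivity bound a(u − u_N, u − u_N) ≥ (1/2)·E² and that the higher-order term is not dominating, i.e. 2·λ·‖u − u_N‖² < E². Then |λ_N − λ| ≥ (1/2)·E² − λ·‖u − u_N‖². -/
open scoped RealInnerProductSpace

theorem apply_sub_sub_eq_of_eigenpair {H : Type*} [NormedAddCommGroup H] [InnerProductSpace ℝ H]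
    (a : H →ₗ[ℝ] H →ₗ[ℝ] ℝ) (hsym : ∀ v w : H, a v w = a w v) {u v : H} {lam : ℝ}
    (hu : ‖u‖ = 1) (hv : ‖v‖ = 1) (hau : a u u = lam) (hmix : a u v = lam * ⟪u, v⟫) :
    a (u - v) (u - v) = a v v - lam + lam * ‖u - v‖ ^ 2 := by
  rw [a.apply_sub_sub_of_symm hsym, norm_sub_sq_real, hu, hv, hau, hmix]
  ring

theorem eigenvalue_error_lower_bound_general
    {H : Type*} [NormedAddCommGroup H] [InnerProductSpace ℝ H]
    (a : H →ₗ[ℝ] H →ₗ[ℝ] ℝ) (hsym : ∀ v w : H, a v w = a w v)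
    (u u_N : H) (lam lamN : ℝ)
    (hu : ‖u‖ = 1) (huN : ‖u_N‖ = 1)
    (hau : a u u = lam) (hauN : a u_N u_N = lamN)
    (hmix : a u u_N = lam * ⟪u, u_N⟫)
    (E : ℝ)
    (hcoer : a (u - u_N) (u - u_N) ≥ (1 / 2) * E ^ 2) :
    |lamN - lam| ≥ (1 / 2) * E ^ 2 - lam * ‖u - u_N‖ ^ 2 := by
  rw [apply_sub_sub_eq_of_eigenpair a hsym hu huN hau hmix, hauN] at hcoer
  calc |lamN - lam| ≥ lamN - lam := le_abs_self _
    _ ≥ (1 / 2) * E ^ 2 - lam * ‖u - u_N‖ ^ 2 := by linarith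

/-- Abstract core of the a posteriori lower bound for the eigenvalue error:
under the coercivity bound `a (u - u_N) (u - u_N) ≥ E²/2` and assuming the
higher-order term is not dominating (`2·lam·‖u - u_N‖² < E²`), the eigenvalue
error satisfies `|lamN - lam| ≥ E²/2 - lam·‖u - u_N‖²`. -/
theorem eigenvalue_error_lower_bound
    {H : Type*} [NormedAddCommGroup H] [InnerProductSpace ℝ H]
    (a : H →ₗ[ℝ] H →ₗ[ℝ] ℝ) (hsym : ∀ v w : H, a v w = a w v)
    (u u_N : H) (lam lamN : ℝ)
    (hu : ‖u‖ = 1) (huN : ‖u_N‖ = 1)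
    (hlam : 0 ≤ lam)
    (hau : a u u = lam) (hauN : a u_N u_N = lamN)
    (hmix : a u u_N = lam * ⟪u, u_N⟫)
    (E : ℝ) (hE : 0 ≤ E)
    (hcoer : a (u - u_N) (u - u_N) ≥ (1 / 2) * E ^ 2)
    (hhot : 2 * lam * ‖u - u_N‖ ^ 2 < E ^ 2) :
    |lamN - lam| ≥ (1 / 2) * E ^ 2 - lam * ‖u - u_N‖ ^ 2 :=
  eigenvalue_error_lower_bound_general a hsym u u_N lam lamN hu huN hau hauN hmix E hcoer
end

section
/- Let V be a real vector space, B₁ : V × V → ℝ a symmetric positive-semidefinite bilinear form, ℓ : V → ℝ a linear functional, and define B(v,w) = ℓ(v)·ℓ(w) + B₁(v,w); assume B is positive definite, so that (V, B) is a real inner product space. Let W ⊆ V be a finite-dimensional subspace containing an element c with B₁(c,c) = 0 and ℓ(c) ≠ 0, and let P : V → W denote the B-orthogonal projection onto W, characterized by B(P v, w) = B(v, w) for all w ∈ W. Then for every v ∈ V: B₁(v − P v, v − P v) ≤ B₁(v, v) and B(v − P v, v − P v) ≤ B(v, v). -/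
/-!
The error `e = v - P v` is `B`-orthogonal to `W`. Since `B₁` is positive semidefinite, the
`B₁`-isotropic vector `c` lies in the kernel of `B₁`, so testing the orthogonality against `c`
gives `ℓ e * ℓ c = 0`, i.e. `ℓ e = 0`. Hence `e` is also `B₁`-orthogonal to `W`, in particular
to `P v`, and Pythagoras for `v = e + P v` gives `B₁ e e ≤ B₁ v v`; as `ℓ e = 0`, also
`B e e = B₁ e e ≤ B₁ v v ≤ B v v`.
-/

namespace LinearMap.BilinForm

variable {R M : Type*} [CommRing R] [LinearOrder R] [IsStrictOrderedRing R]
  [AddCommGroup M] [Module R M] {B : LinearMap.BilinForm R M}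

lemma apply_self_le_apply_add_self_of_apply_eq_zero (hs : ∀ x, 0 ≤ B x x)
    (hB : LinearMap.IsSymm B) {x y : M} (hxy : B x y = 0) :
    B x x ≤ B (x + y) (x + y) := by
  have hyx : B y x = 0 := hB.eq_iff.mp hxy
  have hexp : B (x + y) (x + y) = B x x + B y y := by
    simp only [map_add, LinearMap.add_apply, hxy, hyx]
    ring
  linarith [hs y]

lemma apply_eq_zero_of_apply_self_eq_zero (hs : ∀ x, 0 ≤ B x x)
    (hB : LinearMap.IsSymm B) {c : M} (hc : B c c = 0) (x : M) : B x c = 0 := by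
  rw [hB.eq_iff, (apply_apply_same_eq_zero_iff B hs hB).mp hc, LinearMap.zero_apply]

lemma apply_eq_zero_of_forall_mul_add_apply_eq_zero (hs : ∀ x, 0 ≤ B x x)
    (hB : LinearMap.IsSymm B) (ℓ : M →ₗ[R] R) {W : Submodule R M} {c : M} (hcW : c ∈ W)
    (hc : B c c = 0) (hℓc : ℓ c ≠ 0) {e : M} (he : ∀ w ∈ W, ℓ e * ℓ w + B e w = 0) :
    ℓ e = 0 ∧ ∀ w ∈ W, B e w = 0 := by
  have hℓe : ℓ e = 0 := by
    have h := he c hcW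
    rw [apply_eq_zero_of_apply_self_eq_zero hs hB hc e, add_zero] at h
    exact (mul_eq_zero.mp h).resolve_right hℓc
  refine ⟨hℓe, fun w hw => ?_⟩
  simpa [hℓe] using he w hw

end LinearMap.BilinForm

theorem projection_stability_general
    {V : Type*} [AddCommGroup V] [Module ℝ V]
    (B₁ : V →ₗ[ℝ] V →ₗ[ℝ] ℝ)
    (hB₁sym : ∀ v w : V, B₁ v w = B₁ w v)
    (hB₁psd : ∀ v : V, 0 ≤ B₁ v v)
    (ℓ : V →ₗ[ℝ] ℝ)
    (B : V → V → ℝ) (hB : ∀ v w : V, B v w = ℓ v * ℓ w + B₁ v w)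
    (W : Submodule ℝ V)
    (c : V) (hcW : c ∈ W) (hc₁ : B₁ c c = 0) (hc₂ : ℓ c ≠ 0)
    (P : V → V) (hPmem : ∀ v : V, P v ∈ W)
    (hPchar : ∀ v : V, ∀ w ∈ W, B (P v) w = B v w) :
    ∀ v : V, B₁ (v - P v) (v - P v) ≤ B₁ v v ∧
      B (v - P v) (v - P v) ≤ B v v := by
  have hsymm : B₁.IsSymm := ⟨hB₁sym⟩
  intro v
  have horth : ∀ w ∈ W, ℓ (v - P v) * ℓ w + B₁ (v - P v) w = 0 := fun w hw => by
    have h := hPchar v w hw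
    rw [hB, hB] at h
    simp only [map_sub, LinearMap.sub_apply]
    linarith
  obtain ⟨hℓe, hB₁e⟩ :=
    LinearMap.BilinForm.apply_eq_zero_of_forall_mul_add_apply_eq_zero hB₁psd hsymm ℓ hcW
      hc₁ hc₂ horth
  have hB₁le : B₁ (v - P v) (v - P v) ≤ B₁ v v := by
    simpa using LinearMap.BilinForm.apply_self_le_apply_add_self_of_apply_eq_zero hB₁psd
      hsymm (hB₁e (P v) (hPmem v))
  refine ⟨hB₁le, ?_⟩
  rw [hB, hB, hℓe, zero_mul, zero_add]
  linarith [mul_self_nonneg (ℓ v)]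

/-- Projection stability: with `B v w = ℓ v * ℓ w + B₁ v w` positive definite,
`W` a finite-dimensional subspace containing an element `c` with `B₁ c c = 0`
and `ℓ c ≠ 0`, and `P` the `B`-orthogonal projection onto `W`, we have
`B₁ (v - P v) (v - P v) ≤ B₁ v v` and `B (v - P v) (v - P v) ≤ B v v`. -/
theorem projection_stability
    {V : Type*} [AddCommGroup V] [Module ℝ V]
    (B₁ : V →ₗ[ℝ] V →ₗ[ℝ] ℝ)
    (hB₁sym : ∀ v w : V, B₁ v w = B₁ w v)
    (hB₁psd : ∀ v : V, 0 ≤ B₁ v v)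
    (ℓ : V →ₗ[ℝ] ℝ)
    (B : V → V → ℝ) (hB : ∀ v w : V, B v w = ℓ v * ℓ w + B₁ v w)
    (hBposdef : ∀ v : V, v ≠ 0 → 0 < B v v)
    (W : Submodule ℝ V) (hWfin : FiniteDimensional ℝ W)
    (c : V) (hcW : c ∈ W) (hc₁ : B₁ c c = 0) (hc₂ : ℓ c ≠ 0)
    (P : V → V) (hPmem : ∀ v : V, P v ∈ W)
    (hPchar : ∀ v : V, ∀ w ∈ W, B (P v) w = B v w) :
    ∀ v : V, B₁ (v - P v) (v - P v) ≤ B₁ v v ∧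
      B (v - P v) (v - P v) ≤ B v v :=
  projection_stability_general B₁ hB₁sym hB₁psd ℓ B hB W c hcW hc₁ hc₂ P hPmem hPchar
end
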